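/- Let X : [0,∞) → ℝ be continuous and let F : ℝ → ℝ be continuously differentiable with F' > 0 everywhere, with inverse K := F^{−1}. Then for every t ≥ 0 one has M^K_t(M^F(X)) = X_t, i.e. the Azéma–Yor transform associated with K inverts the Azéma–Yor transform associated with F. -/

import Mathlib

open Filter Set

/-- Running supremum `X̄_t = sup_{u ∈ [0,t]} X_u` of a path `X`. -/
noncomputable def runSup (X : ℝ → ℝ) (t : ℝ) : ℝ := sSup (X '' Set.Icc 0 t)

/-- Azéma–Yor process `M^F_t(X) = F(X̄_t) - F'(X̄_t)(X̄_t - X_t)`. -/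
noncomputable def AY (F F' X : ℝ → ℝ) (t : ℝ) : ℝ :=
  F (runSup X t) - F' (runSup X t) * (runSup X t - X t)

/-! If `m = X̄_t` is attained at `s ≤ t`, then `X_s = X̄_s = m`, so `M^F_s(X) = F(m)`, while
`M^F_u(X) ≤ F(X̄_u) ≤ F(m)` for all `u ≤ t` because `F` is increasing. Hence the running supremum
of `M^F(X)` is `F(X̄)`, and `M^K_t(M^F(X)) = K(F m) - K'(F m) (F m - M^F_t(X)) = m - (m - X_t) = X_t`.
-/

section RunSup

variable {X : ℝ → ℝ} {t u : ℝ}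

theorem le_runSup (hX : ContinuousOn X (Icc 0 t)) (hu : u ∈ Icc 0 t) : X u ≤ runSup X t :=
  le_csSup (isCompact_Icc.image_of_continuousOn hX).bddAbove (mem_image_of_mem X hu)

theorem self_le_runSup (hX : ContinuousOn X (Icc 0 u)) (hu : 0 ≤ u) : X u ≤ runSup X u :=
  le_runSup hX ⟨hu, le_rfl⟩

theorem runSup_le_runSup (hX : ContinuousOn X (Icc 0 t)) (hu : u ∈ Icc 0 t) :
    runSup X u ≤ runSup X t :=
  csSup_le ((nonempty_Icc.mpr hu.1).image X) <| by
    rintro _ ⟨v, hv, rfl⟩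
    exact le_runSup hX ⟨hv.1, hv.2.trans hu.2⟩

theorem exists_eq_runSup (hX : ContinuousOn X (Icc 0 t)) (ht : 0 ≤ t) :
    ∃ s ∈ Icc 0 t, X s = runSup X t :=
  (isCompact_Icc.image_of_continuousOn hX).sSup_mem ((nonempty_Icc.mpr ht).image X)

theorem exists_runSup_eq_self (hX : ContinuousOn X (Icc 0 t)) (ht : 0 ≤ t) :
    ∃ s ∈ Icc 0 t, X s = runSup X t ∧ runSup X s = runSup X t := by
  obtain ⟨s, hs, hXs⟩ := exists_eq_runSup hX ht
  refine ⟨s, hs, hXs, le_antisymm (runSup_le_runSup hX hs) ?_⟩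
  rw [← hXs]
  exact self_le_runSup (hX.mono (Icc_subset_Icc le_rfl hs.2)) hs.1

end RunSup

section AzemaYor

variable {F F' X : ℝ → ℝ} {t u : ℝ}

theorem AY_le (hF' : ∀ x, 0 ≤ F' x) (hX : X u ≤ runSup X u) : AY F F' X u ≤ F (runSup X u) :=
  sub_le_self _ (mul_nonneg (hF' _) (sub_nonneg.mpr hX))

theorem AY_eq_of_eq_runSup (hX : X u = runSup X u) : AY F F' X u = F (runSup X u) := by
  rw [AY, ← hX, sub_self, mul_zero, sub_zero]

theorem runSup_AY (hF : Monotone F) (hF' : ∀ x, 0 ≤ F' x) (hX : ContinuousOn X (Icc 0 t))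
    (ht : 0 ≤ t) : runSup (AY F F' X) t = F (runSup X t) := by
  obtain ⟨s, hs, hXs, hRs⟩ := exists_runSup_eq_self hX ht
  refine IsGreatest.csSup_eq ⟨⟨s, hs, ?_⟩, ?_⟩
  · rw [AY_eq_of_eq_runSup (hXs.trans hRs.symm), hRs]
  · rintro _ ⟨u, hu, rfl⟩
    have hXu : ContinuousOn X (Icc 0 u) := hX.mono (Icc_subset_Icc le_rfl hu.2)
    exact (AY_le hF' (self_le_runSup hXu hu.1)).trans (hF (runSup_le_runSup hX hu))

end AzemaYor

theorem stmt_14_general (X F F' K K' : ℝ → ℝ)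
    (hX : ContinuousOn X (Set.Ici 0))
    (hF : ∀ x : ℝ, HasDerivAt F (F' x) x)
    (hF'pos : ∀ x : ℝ, 0 < F' x)
    (hKF : ∀ x : ℝ, K (F x) = x)
    (hK'F : ∀ x : ℝ, K' (F x) = 1 / F' x) :
    ∀ t : ℝ, 0 ≤ t → AY K K' (AY F F' X) t = X t := by
  intro t ht
  have hFmono : Monotone F := (strictMono_of_hasDerivAt_pos hF hF'pos).monotone
  have hsup := runSup_AY hFmono (fun x ↦ (hF'pos x).le) (hX.mono Icc_subset_Ici_self) ht
  have hne : F' (runSup X t) ≠ 0 := (hF'pos _).ne'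
  rw [AY, hsup, hKF, hK'F, AY]
  field_simp
  ring

/-- If `F' > 0` and `K = F⁻¹` (so that `K'(F(x)) = 1/F'(x)`), the Azéma–Yor transform
associated with `K` inverts the one associated with `F`: `M^K(M^F(X)) = X`. -/
theorem stmt_14 (X F F' K K' : ℝ → ℝ)
    (hX : ContinuousOn X (Set.Ici 0))
    (hF : ∀ x : ℝ, HasDerivAt F (F' x) x)
    (hF'cont : Continuous F')
    (hF'pos : ∀ x : ℝ, 0 < F' x)
    (hKF : ∀ x : ℝ, K (F x) = x)
    (hK'F : ∀ x : ℝ, K' (F x) = 1 / F' x) :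
    ∀ t : ℝ, 0 ≤ t → AY K K' (AY F F' X) t = X t :=
  stmt_14_general X F F' K K' hX hF hF'pos hKF hK'F
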